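/- arXiv:1001.3971 — 2 statements merged into one kernel-verified Lean document; each statement's English description precedes it below -/
import Mathlib

section
/- Multi-parameter bound of the SLD information by the Sarovar–Milburn bound (Theorem): In the multi-parameter spectral-family setup, for every θ ∈ ℝ^p the matrix C_Υ(θ) − H(θ) is positive semidefinite, i.e. H(θ) ≤ C_Υ(θ) in the Loewner order; moreover H(θ) = C_Υ(θ) if and only if ⟨w_j^{(l)}(θ), w_k(θ)⟩ = 0 for all l ∈ {1,…,p} and all j,k with p_j(θ) > 0 and p_k(θ) > 0. -/
open scoped BigOperators

noncomputable section

/-- The Hermitian inner product on `Fin d → ℂ`, conjugate-linear in the first argument. -/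
def inn {d : ℕ} (x y : Fin d → ℂ) : ℂ := ∑ i, (starRingEnd ℂ) (x i) * y i

/-!
Differentiating the orthonormality relations gives `⟨w_j^{(k)}, w_i⟩ = -conj ⟨w_i^{(k)}, w_j⟩`.
Since `(p_i + p_j) - (p_i - p_j)² / (p_i + p_j) = 4 p_i p_j / (p_i + p_j)`, this antisymmetry lets
the sum over `i < j` in `C_Υ - H` be symmetrised and merged with the diagonal sum: `C_Υ - H` is
four times the real part of the weighted Gram matrix `∑_{i,j} h(p_i, p_j) a_{ij} a_{ij}^*`, where
`h(x, y) = 2xy / (x + y)` and `a_{ij} = (⟨w_i^{(k)}, w_j⟩)_k`. Such a matrix is positive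
semidefinite, and it vanishes exactly when `a_{ij} = 0` whenever `p_i, p_j > 0`.
-/

open Matrix ComplexConjugate

lemma conj_inn {d : ℕ} (x y : Fin d → ℂ) : conj (inn x y) = inn y x := by
  simp [inn, map_sum, mul_comm]

lemma HasDerivAt.inn {d : ℕ} {f g : ℝ → Fin d → ℂ} {f' g' : Fin d → ℂ} {t : ℝ}
    (hf : HasDerivAt f f' t) (hg : HasDerivAt g g' t) :
    HasDerivAt (fun s => _root_.inn (f s) (g s)) (_root_.inn f' (g t) + _root_.inn (f t) g') t := by
  have hterm : ∀ m : Fin d, HasDerivAt (fun s => conj (f s m) * g s m)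
      (conj (f' m) * g t m + conj (f t m) * g' m) t := fun m =>
    ((hasDerivAt_pi.1 hf m).star.mul (hasDerivAt_pi.1 hg m))
  simpa [_root_.inn, Finset.sum_add_distrib] using HasDerivAt.fun_sum fun m _ => hterm m

lemma inn_add_inn_eq_zero_of_hasDerivAt {d : ℕ} {f g : ℝ → Fin d → ℂ} {f' g' : Fin d → ℂ}
    {t : ℝ} {z : ℂ} (hf : HasDerivAt f f' t) (hg : HasDerivAt g g' t)
    (hconst : ∀ s, inn (f s) (g s) = z) : inn f' (g t) + inn (f t) g' = 0 := by
  refine (hf.inn hg).unique ?_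
  simpa only [hconst] using hasDerivAt_const t z

lemma inn_partialDeriv_swap {d n : ℕ} (w : Fin d → (Fin n → ℝ) → Fin d → ℂ)
    (wd : Fin d → Fin n → (Fin n → ℝ) → Fin d → ℂ) (G : Fin d → Fin d → ℂ)
    (hgram : ∀ θ i j, inn (w i θ) (w j θ) = G i j)
    (hwd : ∀ i k θ, HasDerivAt (fun t => w i (Function.update θ k t)) (wd i k θ) (θ k))
    (θ : Fin n → ℝ) (i j : Fin d) (k : Fin n) :
    inn (wd j k θ) (w i θ) = -conj (inn (wd i k θ) (w j θ)) := by
  have h := inn_add_inn_eq_zero_of_hasDerivAt (hwd i k θ) (hwd j k θ) fun s => hgram _ i j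
  simp only [Function.update_eq_self] at h
  rw [← conj_inn, eq_neg_of_add_eq_zero_right h, map_neg]

lemma Fintype.sum_sum_eq_sum_add_two_mul_sum_sum_lt {ι R : Type*} [Fintype ι] [LinearOrder ι]
    [CommSemiring R] (F : ι → ι → R) (hF : ∀ i j, F i j = F j i) :
    ∑ i, ∑ j, F i j = ∑ i, F i i + 2 * ∑ i, ∑ j, if i < j then F i j else 0 := by
  have hlt : ∑ i, ∑ j, (if j < i then F i j else 0) = ∑ i, ∑ j, if i < j then F i j else 0 := by
    rw [Finset.sum_comm]; simp only [hF]
  have hsplit : ∀ i j, F i j = (if i < j then F i j else 0) + (if i = j then F i j else 0)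
      + (if j < i then F i j else 0) := by
    intro i j
    rcases lt_trichotomy i j with h | rfl | h
    · simp [h, h.ne, h.not_gt]
    · simp
    · simp [h, h.ne', h.not_gt]
  rw [Finset.sum_congr rfl fun i _ => Finset.sum_congr rfl fun j _ => hsplit i j]
  simp only [Finset.sum_add_distrib, hlt, Finset.sum_ite_eq, Finset.mem_univ, if_true]
  ring

section reGram

def reGram {ι m : Type*} [Fintype ι] (c : ι → ℝ) (a : ι → m → ℂ) : Matrix m m ℝ :=
  Matrix.of fun k l => (∑ i, (c i : ℂ) * a i k * conj (a i l)).re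

variable {ι m : Type*} [Fintype ι] (c : ι → ℝ) (a : ι → m → ℂ)

lemma reGram_apply (k l : m) :
    reGram c a k l = ∑ i, c i * (a i k * conj (a i l)).re := by
  simp [reGram, mul_assoc, Complex.re_sum]

lemma reGram_isHermitian : (reGram c a).IsHermitian := by
  ext k l
  simp only [conjTranspose_apply, star_trivial, reGram_apply]
  refine Finset.sum_congr rfl fun i _ => ?_
  simp only [Complex.mul_re, Complex.conj_re, Complex.conj_im]
  ring

lemma dotProduct_reGram_mulVec [Fintype m] (x : m → ℝ) :
    x ⬝ᵥ reGram c a *ᵥ x = ∑ i, c i * Complex.normSq (∑ k, (x k : ℂ) * a i k) := by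
  have hnormSq : ∀ i, (Complex.normSq (∑ k, (x k : ℂ) * a i k) : ℂ)
      = ∑ k, ∑ l, ((x k * x l : ℝ) : ℂ) * (a i k * conj (a i l)) := by
    intro i
    rw [← Complex.mul_conj, map_sum, Finset.sum_mul_sum]
    simp only [map_mul, Complex.conj_ofReal]
    push_cast
    exact Finset.sum_congr rfl fun k _ => Finset.sum_congr rfl fun l _ => by ring
  have hre : ∀ i, Complex.normSq (∑ k, (x k : ℂ) * a i k)
      = ∑ k, ∑ l, x k * x l * (a i k * conj (a i l)).re := by
    intro i
    rw [← Complex.ofReal_re (Complex.normSq _), hnormSq]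
    simp [Complex.re_sum]
  simp only [hre, dotProduct, mulVec, reGram_apply, Finset.mul_sum, Finset.sum_mul]
  conv_rhs => rw [Finset.sum_comm]
  refine Finset.sum_congr rfl fun k _ => ?_
  conv_rhs => rw [Finset.sum_comm]
  refine Finset.sum_congr rfl fun l _ => ?_
  exact Finset.sum_congr rfl fun i _ => by ring

variable {c}

lemma reGram_posSemidef [Fintype m] (hc : ∀ i, 0 ≤ c i) : (reGram c a).PosSemidef := by
  refine .of_dotProduct_mulVec_nonneg (reGram_isHermitian c a) fun x => ?_
  rw [star_trivial, dotProduct_reGram_mulVec]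
  exact Finset.sum_nonneg fun i _ => mul_nonneg (hc i) (Complex.normSq_nonneg _)

lemma reGram_eq_zero_iff (hc : ∀ i, 0 ≤ c i) : reGram c a = 0 ↔ ∀ i, 0 < c i → a i = 0 := by
  constructor
  · intro h i hci
    funext l
    have hdiag : ∑ j, c j * Complex.normSq (a j l) = 0 := by
      simpa [reGram_apply, Complex.mul_conj] using congrFun (congrFun h l) l
    have hterm := (Finset.sum_eq_zero_iff_of_nonneg fun j _ =>
      mul_nonneg (hc j) (Complex.normSq_nonneg (a j l))).1 hdiag i (Finset.mem_univ i)
    simpa [hci.ne'] using hterm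
  · intro h
    ext k l
    rw [reGram_apply]
    refine Finset.sum_eq_zero fun i _ => ?_
    rcases (hc i).eq_or_lt with hci | hci
    · rw [← hci, zero_mul]
    · simp [h i hci]

end reGram

section hmean

/-- Twice the harmonic mean; at `x + y = 0` the junk value `0` makes `add_sub_sq_div_add` and
`hmean_self` hold unconditionally. -/
def hmean (x y : ℝ) : ℝ := 2 * x * y / (x + y)

lemma add_sub_sq_div_add (x y : ℝ) : (x + y) - (x - y) ^ 2 / (x + y) = 2 * hmean x y := by
  rcases eq_or_ne (x + y) 0 with h | h
  · simp [hmean, h]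
  · rw [hmean]; field_simp; ring

lemma hmean_self (x : ℝ) : hmean x x = x := by
  rcases eq_or_ne x 0 with rfl | h
  · simp [hmean]
  · rw [hmean]; field_simp; ring

lemma hmean_comm (x y : ℝ) : hmean x y = hmean y x := by
  simp only [hmean, mul_right_comm _ x y, add_comm x y]

variable {x y : ℝ}

lemma hmean_nonneg (hx : 0 ≤ x) (hy : 0 ≤ y) : 0 ≤ hmean x y := by
  unfold hmean; positivity

lemma hmean_pos_iff (hx : 0 ≤ x) (hy : 0 ≤ y) : 0 < hmean x y ↔ 0 < x ∧ 0 < y := by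
  refine ⟨fun h => ?_, fun ⟨hx, hy⟩ => by unfold hmean; positivity⟩
  by_contra hxy
  have : x * y = 0 := by
    rcases not_and_or.1 hxy with h0 | h0 <;> simp [le_antisymm (not_lt.1 h0) ‹_›]
  simp [hmean, mul_assoc, this] at h

end hmean

lemma sub_add_eq_reGram_hmean {ι m : Type*} [Fintype ι] [LinearOrder ι] (q : ι → ℝ)
    (hq : ∀ i, 0 ≤ q i) (a : ι → ι → m → ℂ) (ha : ∀ i j k, a j i k = -conj (a i j k))
    (k l : m) :
    (∑ i, ∑ j, if i < j ∧ 0 < q i + q j then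
        ((q i + q j : ℝ) : ℂ) * a i j k * conj (a i j l) else 0).re
      - (∑ i, ∑ j, if i < j ∧ 0 < q i + q j then
        (((q i - q j) ^ 2 / (q i + q j) : ℝ) : ℂ) * a i j k * conj (a i j l) else 0).re
      + (∑ i, if 0 < q i then ((q i : ℝ) : ℂ) * a i i k * conj (a i i l) else 0).re
      = reGram (fun ij : ι × ι => hmean (q ij.1) (q ij.2)) (fun ij => a ij.1 ij.2) k l := by
  set G : ι → ι → ℝ := fun i j => (a i j k * conj (a i j l)).re with hGdef
  have hG : ∀ i j, hmean (q i) (q j) * G i j = hmean (q j) (q i) * G j i := by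
    intro i j
    simp only [hGdef, ha i j, hmean_comm (q i), Complex.mul_re, Complex.neg_re, Complex.neg_im,
      Complex.conj_re, Complex.conj_im]
    ring
  have hpair : ∀ i j, ((if i < j ∧ 0 < q i + q j then (q i + q j) * G i j else 0)
      - if i < j ∧ 0 < q i + q j then (q i - q j) ^ 2 / (q i + q j) * G i j else 0)
      = if i < j then 2 * (hmean (q i) (q j) * G i j) else 0 := by
    intro i j
    by_cases hij : i < j
    · by_cases hs : 0 < q i + q j
      · simp only [hij, hs, and_self, if_true, ← sub_mul, add_sub_sq_div_add, mul_assoc]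
      · have hs0 : q i + q j = 0 := le_antisymm (not_lt.1 hs) (add_nonneg (hq i) (hq j))
        simp [hij, hmean, hs0]
    · simp [hij]
  have hdiag : ∀ i, (if 0 < q i then q i * G i i else 0) = hmean (q i) (q i) * G i i := by
    intro i
    rcases (hq i).eq_or_lt with h0 | hpos
    · simp [← h0, hmean_self]
    · simp [hpos, hmean_self]
  rw [reGram_apply, Fintype.sum_prod_type,
    Fintype.sum_sum_eq_sum_add_two_mul_sum_sum_lt _ hG]
  have hre : ∀ (r : ℝ) i j, ((r : ℂ) * a i j k * conj (a i j l)).re = r * G i j := by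
    intro r i j
    rw [mul_assoc, Complex.re_ofReal_mul]
  simp only [Complex.re_sum, apply_ite Complex.re, Complex.zero_re, hre]
  simp only [← Finset.sum_sub_distrib, hpair, hdiag, Finset.mul_sum, mul_ite, mul_zero]
  exact add_comm _ _

theorem multiparam_sld_le_sarovar_milburn_general {d n : ℕ}
    (p : Fin d → (Fin n → ℝ) → ℝ) (w : Fin d → (Fin n → ℝ) → (Fin d → ℂ))
    (pd : Fin d → Fin n → (Fin n → ℝ) → ℝ)
    (wd : Fin d → Fin n → (Fin n → ℝ) → (Fin d → ℂ))
    (horth : ∀ θ (i j : Fin d), inn (w i θ) (w j θ) = if i = j then 1 else 0)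
    (hpnn : ∀ (i : Fin d) θ, 0 ≤ p i θ)
    (hwd : ∀ (i : Fin d) (k : Fin n) θ,
      HasDerivAt (fun t => w i (Function.update θ k t)) (wd i k θ) (θ k))
    (C H : (Fin n → ℝ) → Matrix (Fin n) (Fin n) ℝ)
    (hC : ∀ θ (k l : Fin n), C θ k l =
        (∑ i, if 0 < p i θ then pd i k θ * pd i l θ / p i θ else 0)
        + 4 * (∑ i, ∑ j, if i < j ∧ 0 < p i θ + p j θ then
            ((p i θ + p j θ : ℝ) : ℂ) * inn (wd i k θ) (w j θ) * inn (w j θ) (wd i l θ)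
            else 0).re
        + 4 * (∑ i, if 0 < p i θ then
            ((p i θ : ℝ) : ℂ) * inn (wd i k θ) (w i θ) * inn (w i θ) (wd i l θ)
            else 0).re)
    (hH : ∀ θ (k l : Fin n), H θ k l =
        (∑ i, if 0 < p i θ then pd i k θ * pd i l θ / p i θ else 0)
        + 4 * (∑ i, ∑ j, if i < j ∧ 0 < p i θ + p j θ then
            (((p i θ - p j θ) ^ 2 / (p i θ + p j θ) : ℝ) : ℂ) *
              inn (wd i k θ) (w j θ) * inn (w j θ) (wd i l θ) else 0).re) :
    ∀ θ : Fin n → ℝ,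
      (C θ - H θ).PosSemidef ∧
      (H θ = C θ ↔ ∀ (l : Fin n) (j k : Fin d),
        0 < p j θ → 0 < p k θ → inn (wd j l θ) (w k θ) = 0) := by
  intro θ
  have hweight : ∀ ij : Fin d × Fin d, 0 ≤ hmean (p ij.1 θ) (p ij.2 θ) :=
    fun ij => hmean_nonneg (hpnn _ θ) (hpnn _ θ)
  have hCH : C θ - H θ = (4 : ℝ) • reGram (fun ij : Fin d × Fin d => hmean (p ij.1 θ) (p ij.2 θ))
      (fun ij k => inn (wd ij.1 k θ) (w ij.2 θ)) := by
    ext k l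
    have hswap : ∀ i j, inn (w j θ) (wd i l θ) = conj (inn (wd i l θ) (w j θ)) :=
      fun _ _ => (conj_inn _ _).symm
    rw [Matrix.sub_apply, hC, hH, Matrix.smul_apply, smul_eq_mul,
      ← sub_add_eq_reGram_hmean (fun i => p i θ) (fun i => hpnn i θ)
        (fun i j k => inn (wd i k θ) (w j θ)) (inn_partialDeriv_swap w wd _ horth hwd θ)]
    simp only [hswap]
    ring
  refine ⟨hCH ▸ (reGram_posSemidef _ hweight).smul (by norm_num), ?_⟩
  rw [eq_comm, ← sub_eq_zero, hCH, smul_eq_zero, reGram_eq_zero_iff _ hweight]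
  simp only [four_ne_zero, false_or, Prod.forall, hmean_pos_iff (hpnn _ θ) (hpnn _ θ),
    funext_iff, Pi.zero_apply, and_imp]
  exact ⟨fun h l j k hj hk => h j k hj hk l, fun h j k hj hk l => h l j k hj hk⟩

/-- **Multi-parameter bound of the SLD information by the Sarovar–Milburn bound.**
`C_Υ(θ) − H(θ)` is positive semidefinite, with equality `H(θ) = C_Υ(θ)` iff
`⟨w_j^{(l)}(θ), w_k(θ)⟩ = 0` for all `l` and all `j, k` with `p_j(θ), p_k(θ) > 0`. -/
theorem multiparam_sld_le_sarovar_milburn {d n : ℕ} (hd : 1 ≤ d) (hn : 1 ≤ n)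
    (p : Fin d → (Fin n → ℝ) → ℝ) (w : Fin d → (Fin n → ℝ) → (Fin d → ℂ))
    (pd : Fin d → Fin n → (Fin n → ℝ) → ℝ)
    (wd : Fin d → Fin n → (Fin n → ℝ) → (Fin d → ℂ))
    (horth : ∀ θ (i j : Fin d), inn (w i θ) (w j θ) = if i = j then 1 else 0)
    (hpnn : ∀ (i : Fin d) θ, 0 ≤ p i θ) (hpsum : ∀ θ, ∑ i, p i θ = 1)
    (hpd : ∀ (i : Fin d) (k : Fin n) θ,
      HasDerivAt (fun t => p i (Function.update θ k t)) (pd i k θ) (θ k))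
    (hwd : ∀ (i : Fin d) (k : Fin n) θ,
      HasDerivAt (fun t => w i (Function.update θ k t)) (wd i k θ) (θ k))
    (hpdC : ∀ i : Fin d, Continuous fun θ k => pd i k θ)
    (hwdC : ∀ i : Fin d, Continuous fun θ k => wd i k θ)
    (hdich : ∀ i : Fin d, (∀ θ, 0 < p i θ) ∨ (∀ θ, p i θ = 0))
    (C H : (Fin n → ℝ) → Matrix (Fin n) (Fin n) ℝ)
    (hC : ∀ θ (k l : Fin n), C θ k l =
        (∑ i, if 0 < p i θ then pd i k θ * pd i l θ / p i θ else 0)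
        + 4 * (∑ i, ∑ j, if i < j ∧ 0 < p i θ + p j θ then
            ((p i θ + p j θ : ℝ) : ℂ) * inn (wd i k θ) (w j θ) * inn (w j θ) (wd i l θ)
            else 0).re
        + 4 * (∑ i, if 0 < p i θ then
            ((p i θ : ℝ) : ℂ) * inn (wd i k θ) (w i θ) * inn (w i θ) (wd i l θ)
            else 0).re)
    (hH : ∀ θ (k l : Fin n), H θ k l =
        (∑ i, if 0 < p i θ then pd i k θ * pd i l θ / p i θ else 0)
        + 4 * (∑ i, ∑ j, if i < j ∧ 0 < p i θ + p j θ then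
            (((p i θ - p j θ) ^ 2 / (p i θ + p j θ) : ℝ) : ℂ) *
              inn (wd i k θ) (w j θ) * inn (w j θ) (wd i l θ) else 0).re) :
    ∀ θ : Fin n → ℝ,
      (C θ - H θ).PosSemidef ∧
      (H θ = C θ ↔ ∀ (l : Fin n) (j k : Fin d),
        0 < p j θ → 0 < p k θ → inn (wd j l θ) (w k θ) = 0) :=
  multiparam_sld_le_sarovar_milburn_general p w pd wd horth hpnn hwd C H hC hH
end
end

section
/- Attainability condition for commuting dependent unitary channels (Proposition): In the commuting-channels setup, for all m,n ∈ {1,…,d−1} one has ⟨∂_m ψ_θ, ∂_n ψ_θ⟩ = (δ_{mn}/d) · g_m'(θ_m)². In particular all these inner products are real, so Im⟨∂_m ψ_θ, ∂_n ψ_θ⟩ = 0 for all m,n (Matsumoto's condition for attainability of the SLD quantum information holds). -/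
/-!
The generator `Σₖ g(θₖ) tₖ` is diagonal in the basis `w` with eigenvalues
`φᵢ(θ) = Σₖ g(θₖ) cₖᵢ`, so `ψ_θ = d^{-1/2} Σᵢ e^{iφᵢ(θ)} wᵢ`. Hence
`∂ₘψ_θ = d^{-1/2} Σᵢ i g'(θₘ) cₘᵢ e^{iφᵢ(θ)} wᵢ`, and in `⟨∂ₘψ_θ, ∂ₙψ_θ⟩` the phases cancel,
leaving the real number `d⁻¹ g'(θₘ) g'(θₙ) Σᵢ cₘᵢ cₙᵢ = δₘₙ g'(θₘ)² / d`.
-/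

open scoped BigOperators

noncomputable section

open Matrix Complex

section

-- `NormedSpace.exp` only depends on the topology, which every matrix norm induces.
attribute [local instance] Matrix.linftyOpNormedRing Matrix.linftyOpNormedAlgebra

theorem Matrix.exp_mulVec_of_mulVec_eq_smul {𝕂 n : Type*} [RCLike 𝕂] [Fintype n] [DecidableEq n]
    {M : Matrix n n 𝕂} {v : n → 𝕂} {μ : 𝕂} (h : M *ᵥ v = μ • v) :
    NormedSpace.exp M *ᵥ v = NormedSpace.exp μ • v := by
  have hpow : ∀ k : ℕ, M ^ k *ᵥ v = μ ^ k • v := by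
    intro k
    induction k with
    | zero => simp
    | succ k ih => rw [pow_succ', ← mulVec_mulVec, ih, mulVec_smul, h, smul_smul, ← pow_succ]
  have hM := (NormedSpace.exp_series_hasSum_exp' (𝕂 := 𝕂) M).map (mulVec.addMonoidHomLeft v)
    (continuous_id.matrix_mulVec continuous_const)
  refine hM.unique ?_
  convert (NormedSpace.exp_series_hasSum_exp' (𝕂 := 𝕂) μ).smul_const v using 2 with k
  simp [mulVec.addMonoidHomLeft, smul_mulVec, hpow, smul_smul]

end

theorem Matrix.exp_mulVec_sum_smul_of_mulVec_eq_smul {n ι : Type*} [Fintype n] [DecidableEq n]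
    [Fintype ι] {M : Matrix n n ℂ} {w : ι → n → ℂ} {μ : ι → ℂ}
    (h : ∀ i, M *ᵥ w i = μ i • w i) (β : ι → ℂ) :
    NormedSpace.exp M *ᵥ ∑ i, β i • w i = ∑ i, (cexp (μ i) * β i) • w i := by
  simp only [mulVec_sum, mulVec_smul, exp_mulVec_of_mulVec_eq_smul (h _), ← exp_eq_exp_ℂ,
    smul_smul, mul_comm]

theorem inn_eq_star_dotProduct {d : ℕ} (x y : Fin d → ℂ) : inn x y = star x ⬝ᵥ y := rfl

section Orthonormal

variable {d : ℕ} {ι : Type*} [Fintype ι] [DecidableEq ι] {w : ι → Fin d → ℂ}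

theorem inn_sum_smul_sum_smul (horth : ∀ i j, inn (w i) (w j) = if i = j then 1 else 0)
    (α β : ι → ℂ) :
    inn (∑ i, α i • w i) (∑ j, β j • w j) = ∑ i, (starRingEnd ℂ) (α i) * β i := by
  rw [inn_eq_star_dotProduct]
  simp only [star_sum, star_smul, sum_dotProduct, dotProduct_sum, smul_dotProduct,
    dotProduct_smul, ← inn_eq_star_dotProduct, horth]
  simp [mul_comm]

theorem sum_smul_vecMulVec_star_mulVec (horth : ∀ i j, inn (w i) (w j) = if i = j then 1 else 0)
    (a : ι → ℂ) (j : ι) :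
    (∑ i, a i • vecMulVec (w i) (star (w i))) *ᵥ w j = a j • w j := by
  simp only [sum_mulVec, smul_mulVec, vecMulVec_mulVec, op_smul_eq_smul,
    ← inn_eq_star_dotProduct, horth, smul_smul]
  simp

theorem exp_I_smul_sum_vecMulVec_mulVec {κ : Type*} [Fintype κ]
    (horth : ∀ i j, inn (w i) (w j) = if i = j then 1 else 0) (a : κ → ℝ) (c : κ → ι → ℝ)
    (β : ℂ) :
    NormedSpace.exp (I • ∑ k, (a k : ℂ) • ∑ i, (c k i : ℂ) • vecMulVec (w i) (star (w i))) *ᵥ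
        (β • ∑ i, w i) =
      ∑ i, (β * cexp (I * ((∑ k, a k * c k i : ℝ) : ℂ))) • w i := by
  have heigen : ∀ j, (I • ∑ k, (a k : ℂ) • ∑ i, (c k i : ℂ) • vecMulVec (w i) (star (w i))) *ᵥ
      w j = (I * ((∑ k, a k * c k j : ℝ) : ℂ)) • w j := by
    intro j
    simp only [smul_mulVec, sum_mulVec, sum_smul_vecMulVec_star_mulVec horth, smul_smul,
      ← Finset.sum_smul]
    push_cast
    rfl
  rw [Finset.smul_sum (r := β), exp_mulVec_sum_smul_of_mulVec_eq_smul heigen]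
  simp only [mul_comm]

theorem inn_sum_smul_cexp_sum_smul_cexp
    (horth : ∀ i j, inn (w i) (w j) = if i = j then 1 else 0) (r : ℝ) (x y φ : ι → ℝ) :
    inn (∑ i, (r * (I * x i * cexp (I * φ i))) • w i)
        (∑ i, (r * (I * y i * cexp (I * φ i))) • w i) =
      ((r ^ 2 * ∑ i, x i * y i : ℝ) : ℂ) := by
  rw [inn_sum_smul_sum_smul horth]
  push_cast
  rw [Finset.mul_sum]
  refine Finset.sum_congr rfl fun i _ => ?_
  have hunit : ∀ z : ℂ, ‖z‖ = 1 → (starRingEnd ℂ) z * z = 1 := fun z hz => by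
    rw [conj_mul', hz]; norm_num
  simp only [map_mul, conj_ofReal]
  linear_combination (r ^ 2 * x i * y i * (starRingEnd ℂ) (cexp (I * φ i)) * cexp (I * φ i)) *
      hunit I norm_I + (r ^ 2 * x i * y i) * hunit _ (norm_exp_I_mul_ofReal (φ i))

end Orthonormal

theorem hasDerivAt_sum_update_mul {κ : Type*} [Fintype κ] [DecidableEq κ] {g : ℝ → ℝ} {g' : ℝ}
    {θ : κ → ℝ} {m : κ} (hg : HasDerivAt g g' (θ m)) (c : κ → ℝ) :
    HasDerivAt (fun t => ∑ k, g (Function.update θ m t k) * c k) (g' * c m) (θ m) := by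
  have hterm : ∀ k ∈ Finset.univ, HasDerivAt (fun t => g (Function.update θ m t k) * c k)
      (if k = m then g' * c m else 0) (θ m) := by
    intro k _
    by_cases hk : k = m
    · subst hk
      simpa using hg.mul_const (c k)
    · simpa [Function.update_of_ne hk, hk] using hasDerivAt_const (θ m) (g (θ k) * c k)
  simpa using HasDerivAt.fun_sum hterm

theorem hasDerivAt_sum_smul_cexp {ι E : Type*} [Fintype ι] [NormedAddCommGroup E]
    [NormedSpace ℂ E] {φ : ι → ℝ → ℝ} {φ' : ι → ℝ} {t : ℝ} (hφ : ∀ i, HasDerivAt (φ i) (φ' i) t)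
    (r : ℂ) (w : ι → E) :
    HasDerivAt (fun t => ∑ i, (r * cexp (I * φ i t)) • w i)
      (∑ i, (r * (I * φ' i * cexp (I * φ i t))) • w i) t := by
  refine HasDerivAt.fun_sum fun i _ => HasDerivAt.smul_const ?_ (w i)
  convert (((hφ i).ofReal_comp.const_mul I).cexp).const_mul r using 1
  ring

theorem commuting_channels_attainability_general {d n : ℕ}
    (w : Fin d → Fin d → ℂ)
    (horth : ∀ i j : Fin d, inn (w i) (w j) = if i = j then 1 else 0)
    (c : Fin (d - 1) → Fin d → ℝ)
    (hcorth : ∀ m m', ∑ i, c m i * c m' i = if m = m' then 1 else 0)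
    (f f' : Fin n → ℝ → ℝ)
    (hf : ∀ (j : Fin n) (s : ℝ), HasDerivAt (f j) (f' j s) s)
    (ψ : (Fin (d - 1) → ℝ) → (Fin d → ℂ))
    (hψ : ∀ θ, ψ θ = (NormedSpace.exp
        (Complex.I • ∑ k, ((∑ j, f j (θ k) : ℝ) : ℂ) •
          (∑ i, (c k i : ℂ) • Matrix.vecMulVec (w i) (star (w i))))).mulVec
        (((1 / Real.sqrt d : ℝ) : ℂ) • ∑ k, w k))
    (Dψ : Fin (d - 1) → (Fin (d - 1) → ℝ) → (Fin d → ℂ))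
    (hDψ : ∀ m θ, HasDerivAt (fun t => ψ (Function.update θ m t)) (Dψ m θ) (θ m)) :
    (∀ (θ : Fin (d - 1) → ℝ) (m m' : Fin (d - 1)),
      inn (Dψ m θ) (Dψ m' θ) =
        if m = m' then (((1 / d) * (∑ j, f' j (θ m)) ^ 2 : ℝ) : ℂ) else 0) ∧
    (∀ (θ : Fin (d - 1) → ℝ) (m m' : Fin (d - 1)),
      (inn (Dψ m θ) (Dψ m' θ)).im = 0) := by
  set r : ℝ := 1 / Real.sqrt d
  let g : ℝ → ℝ := fun s => ∑ j, f j s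
  let g' : ℝ → ℝ := fun s => ∑ j, f' j s
  have hg : ∀ s, HasDerivAt g (g' s) s := fun s => HasDerivAt.fun_sum fun j _ => hf j s
  let φ : (Fin (d - 1) → ℝ) → Fin d → ℝ := fun θ i => ∑ k, g (θ k) * c k i
  have hψφ : ∀ θ, ψ θ = ∑ i, ((r : ℂ) * cexp (I * φ θ i)) • w i := fun θ => by
    rw [hψ]; exact exp_I_smul_sum_vecMulVec_mulVec horth _ c _
  have hDψφ : ∀ m θ, Dψ m θ = ∑ i, (r * (I * (g' (θ m) * c m i : ℝ) * cexp (I * φ θ i))) • w i :=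
    fun m θ => by
    refine (hDψ m θ).unique ?_
    have hpath := hasDerivAt_sum_smul_cexp (φ := fun i t => φ (Function.update θ m t) i)
      (fun i => hasDerivAt_sum_update_mul (hg (θ m)) (c · i)) (r : ℂ) w
    rw [Function.update_eq_self] at hpath
    simpa only [hψφ] using hpath
  have hinn : ∀ θ m m', inn (Dψ m θ) (Dψ m' θ) =
      ((1 / d * (g' (θ m) * g' (θ m')) * ∑ i, c m i * c m' i : ℝ) : ℂ) := fun θ m m' => by
    have hr : r ^ 2 = 1 / d := by rw [div_pow, one_pow, Real.sq_sqrt (Nat.cast_nonneg d)]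
    rw [hDψφ, hDψφ, inn_sum_smul_cexp_sum_smul_cexp horth, hr, Finset.mul_sum, Finset.mul_sum]
    exact congrArg _ (Finset.sum_congr rfl fun i _ => by ring)
  refine ⟨fun θ m m' => ?_, fun θ m m' => by rw [hinn]; exact ofReal_im _⟩
  rw [hinn, hcorth]
  split_ifs with hm
  · subst hm; rw [mul_one, sq]
  · simp

/-- **Attainability condition for commuting dependent unitary channels.**
`⟨∂_m ψ_θ, ∂_{m'} ψ_θ⟩ = (δ_{m m'}/d)·g'(θ_m)²` with `g' = Σ_j f_j'`; in particular all
these inner products are real, so Matsumoto's attainability condition holds. -/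
theorem commuting_channels_attainability {d n : ℕ} (hd : 2 ≤ d)
    (w : Fin d → Fin d → ℂ)
    (horth : ∀ i j : Fin d, inn (w i) (w j) = if i = j then 1 else 0)
    (c : Fin (d - 1) → Fin d → ℝ)
    (hc0 : ∀ m, ∑ i, c m i = 0)
    (hcorth : ∀ m m', ∑ i, c m i * c m' i = if m = m' then 1 else 0)
    (f f' : Fin n → ℝ → ℝ)
    (hf : ∀ (j : Fin n) (s : ℝ), HasDerivAt (f j) (f' j s) s)
    (ψ : (Fin (d - 1) → ℝ) → (Fin d → ℂ))
    (hψ : ∀ θ, ψ θ = (NormedSpace.exp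
        (Complex.I • ∑ k, ((∑ j, f j (θ k) : ℝ) : ℂ) •
          (∑ i, (c k i : ℂ) • Matrix.vecMulVec (w i) (star (w i))))).mulVec
        (((1 / Real.sqrt d : ℝ) : ℂ) • ∑ k, w k))
    (Dψ : Fin (d - 1) → (Fin (d - 1) → ℝ) → (Fin d → ℂ))
    (hDψ : ∀ m θ, HasDerivAt (fun t => ψ (Function.update θ m t)) (Dψ m θ) (θ m)) :
    (∀ (θ : Fin (d - 1) → ℝ) (m m' : Fin (d - 1)),
      inn (Dψ m θ) (Dψ m' θ) =
        if m = m' then (((1 / d) * (∑ j, f' j (θ m)) ^ 2 : ℝ) : ℂ) else 0) ∧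
    (∀ (θ : Fin (d - 1) → ℝ) (m m' : Fin (d - 1)),
      (inn (Dψ m θ) (Dψ m' θ)).im = 0) :=
  commuting_channels_attainability_general w horth c hcorth f f' hf ψ hψ Dψ hDψ
end
end
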